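/- arXiv:2604.17577 — 5 statements merged into one kernel-verified Lean document; each statement's English description precedes it below -/
import Mathlib

section
/- Chamber ordering lemma: Let Γ be an admissible chamber. Then there exists a unique enumeration k^{(1)}, …, k^{(L)} of C_n, where L = |C_n|, such that for every W ∈ F_Γ one has the strict chain W^{k^{(1)}} > W^{k^{(2)}} > ⋯ > W^{k^{(L)}}, and moreover for every W in the closure cl(F_Γ) of F_Γ in W̄ one has the weak chain W^{k^{(1)}} ≥ W^{k^{(2)}} ≥ ⋯ ≥ W^{k^{(L)}}. -/
open Finset Filter Topology
open scoped Classical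

noncomputable section

/-- The closed Arrow–Debreu wealth simplex `{W ∈ [0,∞)^m : Σ q_i W_i = 1}`. -/
def closedSimplex {m : ℕ} (q : Fin m → ℝ) : Set (Fin m → ℝ) :=
  {W | (∀ i, 0 ≤ W i) ∧ ∑ i, q i * W i = 1}

/-- The open Arrow–Debreu wealth simplex `{W ∈ (0,∞)^m : Σ q_i W_i = 1}`. -/
def openSimplex {m : ℕ} (q : Fin m → ℝ) : Set (Fin m → ℝ) :=
  {W | (∀ i, 0 < W i) ∧ ∑ i, q i * W i = 1}

/-- The finite set `C_n` of count vectors `k : Fin m → ℕ` with `Σ k_i = n`. -/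
def countFinset (m n : ℕ) : Finset (Fin m → ℕ) :=
  (Fintype.piFinset fun _ : Fin m => Finset.range (n + 1)).filter fun k => ∑ i, k i = n

/-- The monomial `W^k := Π_i W_i^{k_i}` (with the convention `0^0 = 1`). -/
def mono {m : ℕ} (W : Fin m → ℝ) (k : Fin m → ℕ) : ℝ := ∏ i, W i ^ k i

/-- The multinomial probability `π_k = (n!/(k_1!⋯k_m!))·Π p_i^{k_i}`. -/
def countProb {m : ℕ} (p : Fin m → ℝ) (k : Fin m → ℕ) : ℝ :=
  (Nat.multinomial Finset.univ k : ℝ) * ∏ i, p i ^ k i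

/-- The upper α-quantile of terminal wealth
`Q_{n,α}(W) := sup{t ∈ [0,∞) : Σ_{k ∈ C_n : W^k ≥ t} π_k ≥ α}`. -/
def upperQuantile {m : ℕ} (p : Fin m → ℝ) (n : ℕ) (α : ℝ) (W : Fin m → ℝ) : ℝ :=
  sSup {t : ℝ | 0 ≤ t ∧
    α ≤ ∑ k ∈ countFinset m n, if t ≤ mono W k then countProb p k else 0}

/-- The union of the count hyperplanes `H_{k,ℓ}`. -/
def hyperUnion (m n : ℕ) : Set (Fin m → ℝ) :=
  {u | ∃ k ∈ countFinset m n, ∃ l ∈ countFinset m n,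
    k ≠ l ∧ ∑ i, ((k i : ℝ) - (l i : ℝ)) * u i = 0}

/-- A chamber is a connected component of the complement of the count arrangement. -/
def IsChamber (m n : ℕ) (Γ : Set (Fin m → ℝ)) : Prop :=
  ∃ u ∈ (hyperUnion m n)ᶜ, Γ = connectedComponentIn (hyperUnion m n)ᶜ u

/-- `F_Γ := {W ∈ W⁺⁺ : log W ∈ Γ}`. -/
def chamberFace {m : ℕ} (q : Fin m → ℝ) (Γ : Set (Fin m → ℝ)) : Set (Fin m → ℝ) :=
  {W | W ∈ openSimplex q ∧ (fun i => Real.log (W i)) ∈ Γ}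

/-- `k` is the quantile count vector `k_{α,Γ}` of the chamber `Γ`: the tail mass at `W^k`
is at least `α`, while the strict tail mass is below `α`, for every `W ∈ F_Γ`. -/
def IsQuantileVec {m : ℕ} (p q : Fin m → ℝ) (n : ℕ) (α : ℝ) (Γ : Set (Fin m → ℝ))
    (k : Fin m → ℕ) : Prop :=
  k ∈ countFinset m n ∧
  ∀ W ∈ chamberFace q Γ,
    α ≤ (∑ l ∈ countFinset m n, if mono W k ≤ mono W l then countProb p l else 0) ∧
    (∑ l ∈ countFinset m n, if mono W k < mono W l then countProb p l else 0) < α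


/-- Auxiliary: positive-coordinate monomials as exponentials. -/
lemma mono_eq_exp {m : ℕ} (W : Fin m → ℝ) (hW : ∀ i, 0 < W i) (k : Fin m → ℕ) :
    mono W k = Real.exp (∑ i, (k i : ℝ) * Real.log (W i)) := by
  rw [Real.exp_sum, mono]
  refine Finset.prod_congr rfl fun i _ => ?_
  rw [← Real.log_pow, Real.exp_log (pow_pos (hW i) _)]

lemma mono_lt_iff {m : ℕ} (W : Fin m → ℝ) (hW : ∀ i, 0 < W i) (k l : Fin m → ℕ) :
    mono W k < mono W l ↔
      ∑ i, ((k i : ℝ) - (l i : ℝ)) * Real.log (W i) < 0 := by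
  rw [mono_eq_exp W hW, mono_eq_exp W hW, Real.exp_lt_exp, ← sub_neg,
    ← Finset.sum_sub_distrib]
  simp [sub_mul]

lemma mono_eq_iff {m : ℕ} (W : Fin m → ℝ) (hW : ∀ i, 0 < W i) (k l : Fin m → ℕ) :
    mono W k = mono W l ↔
      ∑ i, ((k i : ℝ) - (l i : ℝ)) * Real.log (W i) = 0 := by
  rw [mono_eq_exp W hW, mono_eq_exp W hW, Real.exp_eq_exp, ← sub_eq_zero,
    ← Finset.sum_sub_distrib]
  simp [sub_mul]

lemma mono_continuous {m : ℕ} (k : Fin m → ℕ) :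
    Continuous fun W : Fin m → ℝ => mono W k := by
  unfold mono
  exact continuous_finset_prod _ fun i _ => (continuous_apply i).pow _

/-- On a chamber, the sign of each linear form `⟨k - l, ·⟩` is constant. -/
lemma sign_const {m n : ℕ} {Γ : Set (Fin m → ℝ)} (hΓ : IsChamber m n Γ)
    {k l : Fin m → ℕ} (hk : k ∈ countFinset m n) (hl : l ∈ countFinset m n) (hkl : k ≠ l)
    {u v : Fin m → ℝ} (hu : u ∈ Γ) (hv : v ∈ Γ) :
    (∑ i, ((k i : ℝ) - (l i : ℝ)) * u i < 0 ↔
      ∑ i, ((k i : ℝ) - (l i : ℝ)) * v i < 0) := by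
  obtain ⟨u₀, hu₀, rfl⟩ := hΓ
  set g : (Fin m → ℝ) → ℝ := fun w => ∑ i, ((k i : ℝ) - (l i : ℝ)) * w i with hg
  have hgc : Continuous g :=
    continuous_finset_sum _ fun i _ => continuous_const.mul (continuous_apply i)
  have hsub : connectedComponentIn (hyperUnion m n)ᶜ u₀ ⊆ (hyperUnion m n)ᶜ :=
    connectedComponentIn_subset _ _
  have hne : ∀ w ∈ connectedComponentIn (hyperUnion m n)ᶜ u₀, g w ≠ 0 := by
    intro w hw h0
    exact hsub hw ⟨k, hk, l, hl, hkl, h0⟩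
  have hpre : IsPreconnected (g '' connectedComponentIn (hyperUnion m n)ᶜ u₀) :=
    (isPreconnected_connectedComponentIn).image g hgc.continuousOn
  have main : ∀ a ∈ connectedComponentIn (hyperUnion m n)ᶜ u₀,
      ∀ b ∈ connectedComponentIn (hyperUnion m n)ᶜ u₀, g a < 0 → g b < 0 := by
    intro a ha b hb h
    by_contra hb'
    have hb0 : 0 < g b := lt_of_le_of_ne (not_lt.1 hb') (Ne.symm (hne b hb))
    have h0 : (0 : ℝ) ∈ g '' connectedComponentIn (hyperUnion m n)ᶜ u₀ :=
      hpre.Icc_subset ⟨a, ha, rfl⟩ ⟨b, hb, rfl⟩ ⟨h.le, hb0.le⟩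
    obtain ⟨w, hw, hw0⟩ := h0
    exact hne w hw hw0
  exact ⟨fun h => main u hu v hv h, fun h => main v hv u hu h⟩

/-- **Chamber ordering lemma.** For every admissible chamber `Γ` there is a unique
enumeration of `C_n` strictly ordering the monomials on `F_Γ`, and weakly ordering them
on the closure of `F_Γ`. -/
theorem chamber_ordering (m n : ℕ) (hm : 2 ≤ m) (hn : 1 ≤ n)
    (p q : Fin m → ℝ) (hp : ∀ i, 0 < p i ∧ p i < 1) (hpsum : ∑ i, p i = 1)
    (hq : ∀ i, 0 < q i)
    (Γ : Set (Fin m → ℝ)) (hΓ : IsChamber m n Γ)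
    (hadm : (chamberFace q Γ).Nonempty) :
    ∃! σ : Fin (countFinset m n).card → (Fin m → ℕ),
      (∀ j, σ j ∈ countFinset m n) ∧ Function.Injective σ ∧
      (∀ W ∈ chamberFace q Γ, ∀ j j' : Fin (countFinset m n).card,
        j < j' → mono W (σ j') < mono W (σ j)) ∧
      (∀ W ∈ closure (chamberFace q Γ), ∀ j j' : Fin (countFinset m n).card,
        j ≤ j' → mono W (σ j') ≤ mono W (σ j)) := by
  classical
  obtain ⟨W₀, hW₀⟩ := hadm
  have hW₀pos : ∀ i, 0 < W₀ i := hW₀.1.1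
  have hlogW₀ : (fun i => Real.log (W₀ i)) ∈ Γ := hW₀.2
  set S := countFinset m n with hSdef
  -- comparisons transfer from W₀ to any W ∈ F_Γ
  have key : ∀ W ∈ chamberFace q Γ, ∀ k ∈ S, ∀ l ∈ S, k ≠ l →
      (mono W k < mono W l ↔ mono W₀ k < mono W₀ l) := by
    intro W hW k hk l hl hkl
    rw [mono_lt_iff W hW.1.1, mono_lt_iff W₀ hW₀pos]
    exact sign_const hΓ hk hl hkl hW.2 hlogW₀
  -- monomials are pairwise distinct on F_Γ
  have hneq : ∀ W ∈ chamberFace q Γ, ∀ k ∈ S, ∀ l ∈ S, k ≠ l →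
      mono W k ≠ mono W l := by
    intro W hW k hk l hl hkl heq
    rw [mono_eq_iff W hW.1.1] at heq
    obtain ⟨u₀, hu₀, hΓeq⟩ := hΓ
    have hmemc : (fun i => Real.log (W i)) ∈ (hyperUnion m n)ᶜ := by
      have h2 := hW.2
      rw [hΓeq] at h2
      exact connectedComponentIn_subset _ _ h2
    exact hmemc ⟨k, hk, l, hl, hkl, heq⟩
  -- the (negated) monomial valuation at W₀ is injective on S
  have hinjS : Set.InjOn (fun k => -mono W₀ k) ↑S := by
    intro k hk l hl h
    by_contra hkl
    exact hneq W₀ hW₀ k hk l hl hkl (neg_injective h)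
  set T : Finset ℝ := S.image fun k => -mono W₀ k with hTdef
  have hTcard : T.card = S.card := Finset.card_image_of_injOn hinjS
  let e := T.orderIsoOfFin hTcard
  have hchoose : ∀ x ∈ T, ∃! k, k ∈ S ∧ -mono W₀ k = x := by
    intro x hx
    obtain ⟨k, hk, hkx⟩ := Finset.mem_image.1 hx
    exact ⟨k, ⟨hk, hkx⟩, fun l ⟨hl, hlx⟩ => hinjS hl hk (by show -mono W₀ l = -mono W₀ k; rw [hlx, hkx])⟩
  let σ : Fin S.card → (Fin m → ℕ) :=
    fun j => Finset.choose (fun k => -mono W₀ k = (e j).1) S (hchoose _ (e j).2)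
  have hmem : ∀ j, σ j ∈ S := fun j => Finset.choose_mem _ _ _
  have hval : ∀ j, -mono W₀ (σ j) = (e j).1 :=
    fun j => Finset.choose_property (fun k => -mono W₀ k = (e j).1) S (hchoose _ (e j).2)
  have hstrict₀ : ∀ j j' : Fin S.card, j < j' → mono W₀ (σ j') < mono W₀ (σ j) := by
    intro j j' hjj
    have h1 : (e j : ℝ) < (e j' : ℝ) := by
      exact_mod_cast e.strictMono hjj
    rw [← hval j, ← hval j'] at h1
    linarith
  have hinj : Function.Injective σ := by
    intro j j' h
    by_contra hne
    rcases lt_or_gt_of_ne hne with h1 | h1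
    · exact (hstrict₀ j j' h1).ne' (congrArg (mono W₀) h)
    · exact (hstrict₀ j' j h1).ne (congrArg (mono W₀) h)
  have hstrict : ∀ W ∈ chamberFace q Γ, ∀ j j' : Fin S.card,
      j < j' → mono W (σ j') < mono W (σ j) := by
    intro W hW j j' hjj
    have hne : σ j' ≠ σ j := fun h => hjj.ne' (hinj h)
    exact (key W hW _ (hmem j') _ (hmem j) hne).2 (hstrict₀ j j' hjj)
  have hweak : ∀ W ∈ closure (chamberFace q Γ), ∀ j j' : Fin S.card,
      j ≤ j' → mono W (σ j') ≤ mono W (σ j) := by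
    intro W hW j j' hjj
    rcases eq_or_lt_of_le hjj with rfl | hjj'
    · exact le_refl _
    · have hclosed : IsClosed {V : Fin m → ℝ | mono V (σ j') ≤ mono V (σ j)} :=
        isClosed_le (mono_continuous (σ j')) (mono_continuous (σ j))
      have hsub : chamberFace q Γ ⊆ {V | mono V (σ j') ≤ mono V (σ j)} :=
        fun V hV => (hstrict V hV j j' hjj').le
      exact closure_minimal hsub hclosed hW
  refine ⟨σ, ⟨hmem, hinj, hstrict, hweak⟩, ?_⟩
  -- uniqueness
  rintro τ ⟨hτmem, hτinj, hτstrict, -⟩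
  have hτ₀ : ∀ j j' : Fin S.card, j < j' → mono W₀ (τ j') < mono W₀ (τ j) :=
    fun j j' h => hτstrict W₀ hW₀ j j' h
  -- both τ and σ have range exactly S
  have hrange : ∀ (ρ : Fin S.card → (Fin m → ℕ)), Function.Injective ρ →
      (∀ j, ρ j ∈ S) → Set.range ρ = ↑S := by
    intro ρ hρinj hρmem
    have himg : Finset.univ.image ρ = S := by
      apply Finset.eq_of_subset_of_card_le
      · intro x hx
        obtain ⟨j, _, rfl⟩ := Finset.mem_image.1 hx
        exact hρmem j
      · rw [Finset.card_image_of_injective _ hρinj, Finset.card_univ, Fintype.card_fin]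
    ext x
    simp only [Set.mem_range, Finset.mem_coe, ← himg, Finset.mem_image,
      Finset.mem_univ, true_and]
  -- compare via strictly antitone real valuations
  let F : Fin S.card → ℝ := fun j => -mono W₀ (τ j)
  let G : Fin S.card → ℝ := fun j => -mono W₀ (σ j)
  have hF : StrictMono F := by
    intro j j' h
    have := hτ₀ j j' h
    simp only [F]
    linarith
  have hG : StrictMono G := by
    intro j j' h
    have := hstrict₀ j j' h
    simp only [G]
    linarith
  have hrangeFG : Set.range F = Set.range G := by
    have h1 : Set.range F = (fun k => -mono W₀ k) '' ↑S := by
      rw [show F = (fun k => -mono W₀ k) ∘ τ from rfl, Set.range_comp,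
        hrange τ hτinj hτmem]
    have h2 : Set.range G = (fun k => -mono W₀ k) '' ↑S := by
      rw [show G = (fun k => -mono W₀ k) ∘ σ from rfl, Set.range_comp,
        hrange σ hinj hmem]
    rw [h1, h2]
  haveI : WellFoundedLT (Fin S.card) := Finite.to_wellFoundedLT
  have hFG : F = G := (StrictMono.range_inj hF hG).1 hrangeFG
  funext j
  have hj : -mono W₀ (τ j) = -mono W₀ (σ j) := congrFun hFG j
  by_contra hne
  exact hneq W₀ hW₀ _ (hτmem j) _ (hmem j) hne (neg_injective hj)
end
end

section
/- Chamber covering: For every W in the closed Arrow–Debreu wealth simplex W̄ there exists an admissible chamber Γ such that W lies in the closure cl(F_Γ) of F_Γ in W̄; equivalently, W̄ is the union over all admissible chambers Γ of the sets cl(F_Γ). -/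
open Finset Filter Topology
open scoped Classical

noncomputable section

/-! The complement of the count arrangement is dense (finitely many hyperplanes, Baire), and
`u ↦ exp u / ⟨q, exp u⟩` maps it continuously into `W⁺⁺`, changing `log W` only along the
diagonal, to which every `H_{k,ℓ}` is parallel. So the points of `W⁺⁺` with generic logarithm are
dense in `W̄`. Sorting them by the (finitely many) sign patterns of the forms `⟨k - ℓ, log W⟩`,
`W` lies in the closure of one class; a class lies in a single chamber because the points with a
given sign pattern form a convex cone avoiding every `H_{k,ℓ}`. -/

theorem dense_setOf_forall_ne_zero {E ι : Type*} [TopologicalSpace E] [AddCommGroup E]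
    [Module ℝ E] [ContinuousAdd E] [ContinuousSMul ℝ E] [BaireSpace E] (s : Finset ι)
    (f : ι → E →L[ℝ] ℝ) (hf : ∀ i ∈ s, f i ≠ 0) : Dense {x | ∀ i ∈ s, f i x ≠ 0} := by
  have hset : {x | ∀ i ∈ s, f i x ≠ 0} = ⋂ i ∈ (s : Set ι), {x | f i x ≠ 0} := by ext; simp
  rw [hset]
  refine dense_biInter_of_isOpen (fun i _ => isOpen_ne_fun (f i).continuous continuous_const)
    s.countable_toSet fun i hi => ?_
  change Dense ((LinearMap.ker (f i : E →ₗ[ℝ] ℝ) : Set E)ᶜ)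
  rw [← interior_eq_empty_iff_dense_compl, ← Set.not_nonempty_iff_eq_empty]
  intro hint
  have := Submodule.eq_top_of_nonempty_interior' _ hint
  exact hf i hi (ContinuousLinearMap.coe_injective (LinearMap.ker_eq_top.1 this))

section CountArrangement

variable {m n : ℕ}

def countForm (k l : Fin m → ℕ) : (Fin m → ℝ) →L[ℝ] ℝ :=
  ∑ i, ((k i : ℝ) - l i) • ContinuousLinearMap.proj i

@[simp]
theorem countForm_apply (k l : Fin m → ℕ) (u : Fin m → ℝ) :
    countForm k l u = ∑ i, ((k i : ℝ) - l i) * u i := by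
  simp [countForm]

theorem countForm_swap (k l : Fin m → ℕ) (u : Fin m → ℝ) :
    countForm l k u = -countForm k l u := by
  simp only [countForm_apply, ← sum_neg_distrib]
  exact sum_congr rfl fun i _ => by ring

theorem countForm_ne_zero {k l : Fin m → ℕ} (h : k ≠ l) : countForm k l ≠ 0 := by
  obtain ⟨i, hi⟩ := Function.ne_iff.1 h
  intro h0
  have := congrArg (· (Pi.single i 1)) h0
  simp only [countForm_apply, Pi.single_apply, mul_ite, mul_one, mul_zero, sum_ite_eq', mem_univ,
    if_true, zero_apply, sub_eq_zero, Nat.cast_inj] at this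
  exact hi this

theorem countForm_sub_const {k l : Fin m → ℕ} (hk : k ∈ countFinset m n) (hl : l ∈ countFinset m n)
    (u : Fin m → ℝ) (c : ℝ) : countForm k l (fun i => u i - c) = countForm k l u := by
  have hsum : ∑ i, ((k i : ℝ) - l i) = 0 := by
    rw [sum_sub_distrib, sub_eq_zero]
    exact_mod_cast (mem_filter.1 hk).2.trans (mem_filter.1 hl).2.symm
  simp only [countForm_apply, mul_sub, sum_sub_distrib, ← sum_mul, hsum, zero_mul, sub_zero]

theorem compl_hyperUnion :
    (hyperUnion m n)ᶜ = {u | ∀ kl ∈ (countFinset m n).offDiag, countForm kl.1 kl.2 u ≠ 0} := by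
  ext u
  simp only [hyperUnion, Set.mem_compl_iff, Set.mem_ofPred_eq, not_exists, not_and, mem_offDiag,
    countForm_apply, Prod.forall, and_imp]
  exact ⟨fun h k l hk hl => h k hk l hl, fun h k hk l hl => h k l hk hl⟩

theorem dense_compl_hyperUnion : Dense (hyperUnion m n)ᶜ := by
  rw [compl_hyperUnion]
  exact dense_setOf_forall_ne_zero _ _ fun kl hkl => countForm_ne_zero (mem_offDiag.1 hkl).2.2

theorem sub_const_mem_compl_hyperUnion_iff (u : Fin m → ℝ) (c : ℝ) :
    (fun i => u i - c) ∈ (hyperUnion m n)ᶜ ↔ u ∈ (hyperUnion m n)ᶜ := by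
  simp only [compl_hyperUnion, Set.mem_ofPred_eq]
  refine forall₂_congr fun kl hkl => ?_
  rw [countForm_sub_const (mem_offDiag.1 hkl).1 (mem_offDiag.1 hkl).2.1]

def positivePairs (n : ℕ) (u : Fin m → ℝ) : Finset ((Fin m → ℕ) × (Fin m → ℕ)) :=
  (countFinset m n).offDiag.filter fun kl => 0 < countForm kl.1 kl.2 u

def signCone (S : Finset ((Fin m → ℕ) × (Fin m → ℕ))) : Set (Fin m → ℝ) :=
  {u | ∀ kl ∈ S, 0 < countForm kl.1 kl.2 u}

theorem mem_signCone_positivePairs (u : Fin m → ℝ) : u ∈ signCone (positivePairs n u) :=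
  fun _ hkl => (mem_filter.1 hkl).2

theorem convex_signCone (S : Finset ((Fin m → ℕ) × (Fin m → ℕ))) : Convex ℝ (signCone S) := by
  have : signCone S = ⋂ kl ∈ S, {u | 0 < countForm kl.1 kl.2 u} := by ext; simp [signCone]
  rw [this]
  exact convex_iInter₂ fun kl _ => convex_halfSpace_gt (countForm kl.1 kl.2).isLinear 0

theorem signCone_positivePairs_subset_compl {u : Fin m → ℝ} (hu : u ∈ (hyperUnion m n)ᶜ) :
    signCone (positivePairs n u) ⊆ (hyperUnion m n)ᶜ := by
  rw [compl_hyperUnion] at hu ⊢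
  intro v hv ⟨k, l⟩ hkl hv0
  rcases (hu _ hkl).lt_or_gt with hneg | hpos
  · have hlk : (l, k) ∈ (countFinset m n).offDiag := by
      simp only [mem_offDiag] at hkl ⊢
      exact ⟨hkl.2.1, hkl.1, hkl.2.2.symm⟩
    have := hv (l, k) (mem_filter.2 ⟨hlk, by simpa [countForm_swap k l u] using hneg⟩)
    simp [countForm_swap k l v, hv0] at this
  · exact (hv _ (mem_filter.2 ⟨hkl, hpos⟩)).ne' hv0

theorem signCone_positivePairs_subset_chamber {u : Fin m → ℝ} (hu : u ∈ (hyperUnion m n)ᶜ) :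
    signCone (positivePairs n u) ⊆ connectedComponentIn (hyperUnion m n)ᶜ u :=
  (convex_signCone _).isPreconnected.subset_connectedComponentIn (mem_signCone_positivePairs u)
    (signCone_positivePairs_subset_compl hu)

section Simplex

variable {q : Fin m → ℝ}

theorem neZero_of_mem_closedSimplex {W : Fin m → ℝ} (hW : W ∈ closedSimplex q) : NeZero m :=
  ⟨by rintro rfl; simpa using hW.2⟩

theorem openSimplex_subset_closedSimplex : openSimplex q ⊆ closedSimplex q :=
  fun _ hW => ⟨fun i => (hW.1 i).le, hW.2⟩

theorem openSimplex_nonempty [NeZero m] (hq : ∀ i, 0 < q i) : (openSimplex q).Nonempty := by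
  have hm : (0 : ℝ) < m := Nat.cast_pos.2 (NeZero.pos m)
  refine ⟨fun i => 1 / (m * q i), fun i => by have := hq i; positivity, ?_⟩
  calc ∑ i, q i * (1 / (m * q i)) = ∑ _i : Fin m, 1 / (m : ℝ) :=
        sum_congr rfl fun i _ => by field_simp [(hq i).ne']
    _ = 1 := by simp [hm.ne']

theorem openSegment_subset_openSimplex {W W₀ : Fin m → ℝ} (hW : W ∈ closedSimplex q)
    (hW₀ : W₀ ∈ openSimplex q) : openSegment ℝ W W₀ ⊆ openSimplex q := by
  rintro _ ⟨a, b, ha, hb, hab, rfl⟩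
  refine ⟨fun i => ?_, ?_⟩
  · have := hW.1 i
    have := hW₀.1 i
    simp only [Pi.add_apply, Pi.smul_apply, smul_eq_mul]
    positivity
  · have hsum : ∑ i, q i * (a • W + b • W₀) i = a * ∑ i, q i * W i + b * ∑ i, q i * W₀ i := by
      rw [mul_sum, mul_sum, ← sum_add_distrib]
      exact sum_congr rfl fun i _ => by simp only [Pi.add_apply, Pi.smul_apply, smul_eq_mul]; ring
    rw [hsum, hW.2, hW₀.2, mul_one, mul_one, hab]

theorem closedSimplex_subset_closure_openSimplex (hq : ∀ i, 0 < q i) :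
    closedSimplex q ⊆ closure (openSimplex q) := by
  intro W hW
  have := neZero_of_mem_closedSimplex hW
  obtain ⟨W₀, hW₀⟩ := openSimplex_nonempty hq
  exact closure_mono (openSegment_subset_openSimplex hW hW₀)
    (segment_subset_closure_openSegment (left_mem_segment ℝ W W₀))

def normalizedExp (q u : Fin m → ℝ) : Fin m → ℝ :=
  fun i => Real.exp (u i) / ∑ j, q j * Real.exp (u j)

theorem normalizedExp_log {W : Fin m → ℝ} (hW : W ∈ openSimplex q) :
    normalizedExp q (fun i => Real.log (W i)) = W := by
  ext i
  simp only [normalizedExp, Real.exp_log (hW.1 _), hW.2, div_one]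

variable [NeZero m] (hq : ∀ i, 0 < q i)
include hq

theorem sum_mul_exp_pos (u : Fin m → ℝ) : 0 < ∑ j, q j * Real.exp (u j) :=
  sum_pos (fun j _ => mul_pos (hq j) (Real.exp_pos _)) univ_nonempty

theorem continuous_normalizedExp : Continuous (normalizedExp q) :=
  continuous_pi fun i => (by fun_prop : Continuous fun u : Fin m → ℝ => Real.exp (u i)).div
    (by fun_prop) fun u => (sum_mul_exp_pos hq u).ne'

theorem normalizedExp_mem_openSimplex (u : Fin m → ℝ) : normalizedExp q u ∈ openSimplex q := by
  refine ⟨fun i => div_pos (Real.exp_pos _) (sum_mul_exp_pos hq u), ?_⟩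
  simp only [normalizedExp, mul_div_assoc', ← sum_div]
  exact div_self (sum_mul_exp_pos hq u).ne'

theorem log_normalizedExp (u : Fin m → ℝ) : (fun i => Real.log (normalizedExp q u i)) =
    fun i => u i - Real.log (∑ j, q j * Real.exp (u j)) := by
  ext i
  rw [normalizedExp, Real.log_div (Real.exp_pos _).ne' (sum_mul_exp_pos hq u).ne', Real.log_exp]

end Simplex

def genericSimplex (q : Fin m → ℝ) (n : ℕ) : Set (Fin m → ℝ) :=
  {W ∈ openSimplex q | (fun i => Real.log (W i)) ∈ (hyperUnion m n)ᶜ}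

theorem openSimplex_subset_closure_genericSimplex {q : Fin m → ℝ} (hq : ∀ i, 0 < q i) :
    openSimplex q ⊆ closure (genericSimplex q n) := by
  intro W hW
  have := neZero_of_mem_closedSimplex (openSimplex_subset_closedSimplex hW)
  have himage : normalizedExp q '' (hyperUnion m n)ᶜ ⊆ genericSimplex q n := by
    rintro _ ⟨u, hu, rfl⟩
    refine ⟨normalizedExp_mem_openSimplex hq u, ?_⟩
    rw [log_normalizedExp hq]
    exact (sub_const_mem_compl_hyperUnion_iff u _).2 hu
  rw [← normalizedExp_log hW]
  refine closure_mono himage (image_closure_subset_closure_image (continuous_normalizedExp hq) ?_)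
  exact ⟨_, dense_compl_hyperUnion.closure_eq.symm ▸ Set.mem_univ _, rfl⟩

theorem closedSimplex_subset_closure_genericSimplex {q : Fin m → ℝ} (hq : ∀ i, 0 < q i) :
    closedSimplex q ⊆ closure (genericSimplex q n) :=
  (closedSimplex_subset_closure_openSimplex hq).trans
    (closure_minimal (openSimplex_subset_closure_genericSimplex hq) isClosed_closure)

def signFace (q : Fin m → ℝ) (n : ℕ) (S : Finset ((Fin m → ℕ) × (Fin m → ℕ))) :
    Set (Fin m → ℝ) :=
  {W ∈ genericSimplex q n | positivePairs n (fun i => Real.log (W i)) = S}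

theorem genericSimplex_subset_iUnion_signFace (q : Fin m → ℝ) :
    genericSimplex q n ⊆ ⋃ S ∈ (countFinset m n).offDiag.powerset, signFace q n S :=
  fun _ hW => Set.mem_biUnion (mem_powerset.2 (filter_subset _ _)) ⟨hW, rfl⟩

theorem signFace_subset_chamberFace {q W₀ : Fin m → ℝ} {S : Finset ((Fin m → ℕ) × (Fin m → ℕ))}
    (hW₀ : W₀ ∈ signFace q n S) :
    signFace q n S ⊆
      chamberFace q (connectedComponentIn (hyperUnion m n)ᶜ fun i => Real.log (W₀ i)) := by
  rintro W ⟨hW, hWS⟩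
  refine ⟨hW.1, signCone_positivePairs_subset_chamber hW₀.1.2 ?_⟩
  rw [hW₀.2, ← hWS]
  exact mem_signCone_positivePairs _

end CountArrangement

theorem chamber_covering_general (m n : ℕ) (q : Fin m → ℝ) (hq : ∀ i, 0 < q i) :
    ∀ W ∈ closedSimplex q, ∃ Γ : Set (Fin m → ℝ),
      IsChamber m n Γ ∧ (chamberFace q Γ).Nonempty ∧ W ∈ closure (chamberFace q Γ) := by
  intro W hW
  obtain ⟨S, -, hWS⟩ := Set.mem_iUnion₂.1 <| (Finset.closure_biUnion _ _).subset <|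
    closure_mono (genericSimplex_subset_iUnion_signFace q)
      (closedSimplex_subset_closure_genericSimplex hq hW)
  obtain ⟨W₀, hW₀⟩ := closure_nonempty_iff.1 ⟨W, hWS⟩
  exact ⟨_, ⟨_, hW₀.1.2, rfl⟩, ⟨W₀, signFace_subset_chamberFace hW₀ hW₀⟩,
    closure_mono (signFace_subset_chamberFace hW₀) hWS⟩

/-- **Chamber covering.** Every point of the closed Arrow–Debreu simplex lies in the
closure of `F_Γ` for some admissible chamber `Γ`. -/
theorem chamber_covering (m n : ℕ) (hm : 2 ≤ m) (hn : 1 ≤ n)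
    (p q : Fin m → ℝ) (hp : ∀ i, 0 < p i ∧ p i < 1) (hpsum : ∑ i, p i = 1)
    (hq : ∀ i, 0 < q i) :
    ∀ W ∈ closedSimplex q, ∃ Γ : Set (Fin m → ℝ),
      IsChamber m n Γ ∧ (chamberFace q Γ).Nonempty ∧ W ∈ closure (chamberFace q Γ) :=
  chamber_covering_general m n q hq
end
end

section
/- Exact chamber quantile formula: Fix α ∈ (0,1) and an admissible chamber Γ, with unique enumeration k^{(1)}, …, k^{(L)} of C_n strictly ordering the monomials on F_Γ, quantile index r = r_α(Γ) (the smallest r with Σ_{j=1}^r π_{k^{(j)}} ≥ α), and quantile count vector k_{α,Γ} := k^{(r)}. Then for every W ∈ cl(F_Γ) one has Q_{n,α}(W) = W^{k_{α,Γ}}; in particular, for W ∈ F_Γ, log Q_{n,α}(W) = Σ_{i=1}^m (k_{α,Γ})_i · log W_i. -/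
open Finset Filter Topology
open scoped Classical

noncomputable section

/-! On the closure of `F_Γ` the monomials are weakly decreasing along the enumeration `σ`,
so the tail mass of a level `t` is carried by an initial segment of indices. At `t = W^{σ r}`
that segment contains `Iic r`, whose mass reaches `α`; for `t > W^{σ r}` it lies in `Iio r`,
whose mass stays below `α` by minimality of `r`. Hence `W^{σ r}` is the largest admissible
level, i.e. the supremum defining the quantile. -/

section QuantileOfOrderedValues

variable {ι : Type*} [LinearOrder ι] [LocallyFiniteOrderBot ι] {w v : ι → ℝ} {α : ℝ} {r : ι}

theorem sum_Iio_lt_of_forall_lt_sum_Iic [PredOrder ι] (hα : 0 < α)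
    (hrmin : ∀ r' < r, ∑ j ∈ Iic r', w j < α) : ∑ j ∈ Iio r, w j < α := by
  by_cases hr : IsMin r
  · rwa [Iio_eq_empty.mpr hr, sum_empty]
  · rw [← Iic_pred_eq_Iio_of_not_isMin hr]
    exact hrmin _ (Order.pred_lt_of_not_isMin hr)

variable [Fintype ι]

theorem sum_Iic_le_tail_of_antitone (hv : Antitone v) (hw : ∀ j, 0 ≤ w j) (r : ι) :
    ∑ j ∈ Iic r, w j ≤ ∑ j, if v r ≤ v j then w j else 0 :=
  calc ∑ j ∈ Iic r, w j = ∑ j ∈ Iic r, if v r ≤ v j then w j else 0 :=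
        sum_congr rfl fun j hj => (if_pos (hv (mem_Iic.mp hj))).symm
    _ ≤ ∑ j, if v r ≤ v j then w j else 0 :=
        sum_le_sum_of_subset_of_nonneg (subset_univ _) fun j _ _ => by
          split_ifs
          exacts [hw j, le_rfl]

theorem tail_le_sum_Iio_of_antitone (hv : Antitone v) (hw : ∀ j, 0 ≤ w j) {t : ℝ}
    (ht : v r < t) : ∑ j, (if t ≤ v j then w j else 0) ≤ ∑ j ∈ Iio r, w j := by
  have hvanish : ∀ j ∉ Iio r, (if t ≤ v j then w j else 0) = 0 := fun j hj =>
    if_neg (not_le.mpr ((hv (not_lt.mp (mem_Iio.not.mp hj))).trans_lt ht))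
  rw [← sum_subset (subset_univ _) fun j _ hj => hvanish j hj]
  exact sum_le_sum fun j _ => by
    split_ifs
    exacts [le_rfl, hw j]

theorem sSup_tail_eq_of_antitone [PredOrder ι] (hv : Antitone v) (hvr : 0 ≤ v r)
    (hw : ∀ j, 0 ≤ w j) (hα : 0 < α) (hr : α ≤ ∑ j ∈ Iic r, w j)
    (hrmin : ∀ r' < r, ∑ j ∈ Iic r', w j < α) :
    sSup {t : ℝ | 0 ≤ t ∧ α ≤ ∑ j, if t ≤ v j then w j else 0} = v r := by
  refine IsGreatest.csSup_eq ⟨⟨hvr, hr.trans (sum_Iic_le_tail_of_antitone hv hw r)⟩, ?_⟩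
  rintro t ⟨-, ht⟩
  by_contra! hlt
  exact (ht.trans (tail_le_sum_Iio_of_antitone hv hw hlt)).not_gt
    (sum_Iio_lt_of_forall_lt_sum_Iic hα hrmin)

end QuantileOfOrderedValues

theorem Finset.sum_comp_eq_sum_of_injective {α M : Type*} [AddCommMonoid M]
    {s : Finset α} {σ : Fin s.card → α} (hmem : ∀ j, σ j ∈ s) (hinj : Function.Injective σ)
    (f : α → M) : ∑ j, f (σ j) = ∑ k ∈ s, f k := by
  have himage : univ.image σ = s :=
    eq_of_subset_of_card_le (image_subset_iff.mpr fun j _ => hmem j)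
      (by rw [card_image_of_injective _ hinj, card_univ, Fintype.card_fin])
  rw [← sum_image fun a _ b _ h => hinj h, himage]

theorem countProb_nonneg {m : ℕ} {p : Fin m → ℝ} (hp : ∀ i, 0 ≤ p i) (k : Fin m → ℕ) :
    0 ≤ countProb p k :=
  mul_nonneg (Nat.cast_nonneg _) (prod_nonneg fun i _ => pow_nonneg (hp i) _)

theorem mono_nonneg {m : ℕ} {W : Fin m → ℝ} (hW : ∀ i, 0 ≤ W i) (k : Fin m → ℕ) :
    0 ≤ mono W k :=
  prod_nonneg fun i _ => pow_nonneg (hW i) _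

theorem log_mono {m : ℕ} {W : Fin m → ℝ} (hW : ∀ i, 0 < W i) (k : Fin m → ℕ) :
    Real.log (mono W k) = ∑ i, (k i : ℝ) * Real.log (W i) := by
  rw [mono, Real.log_prod fun i _ => pow_ne_zero _ (hW i).ne']
  simp only [Real.log_pow]

theorem isClosed_closedSimplex {m : ℕ} (q : Fin m → ℝ) : IsClosed (closedSimplex q) := by
  simp only [closedSimplex, Set.ofPred_and, Set.ofPred_forall]
  exact (isClosed_iInter fun i => isClosed_le continuous_const (continuous_apply i)).inter
    (isClosed_eq (by fun_prop) continuous_const)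

theorem closure_chamberFace_subset_closedSimplex {m : ℕ} (q : Fin m → ℝ)
    (Γ : Set (Fin m → ℝ)) : closure (chamberFace q Γ) ⊆ closedSimplex q :=
  closure_minimal (fun _ hW => ⟨fun i => (hW.1.1 i).le, hW.1.2⟩) (isClosed_closedSimplex q)

theorem upperQuantile_eq_sSup_comp {m n : ℕ} (p : Fin m → ℝ) (α : ℝ) (W : Fin m → ℝ)
    {σ : Fin (countFinset m n).card → (Fin m → ℕ)} (hmem : ∀ j, σ j ∈ countFinset m n)
    (hinj : Function.Injective σ) :
    upperQuantile p n α W = sSup {t : ℝ | 0 ≤ t ∧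
      α ≤ ∑ j, if t ≤ mono W (σ j) then countProb p (σ j) else 0} := by
  rw [upperQuantile]
  congr! 4 with t
  rw [← sum_comp_eq_sum_of_injective hmem hinj]

theorem chamber_quantile_formula_general (m n : ℕ)
    (p q : Fin m → ℝ) (hp : ∀ i, 0 < p i ∧ p i < 1)
    (α : ℝ) (hα : 0 < α ∧ α < 1)
    (Γ : Set (Fin m → ℝ))
    (σ : Fin (countFinset m n).card → (Fin m → ℕ))
    (hmem : ∀ j, σ j ∈ countFinset m n) (hinj : Function.Injective σ)
    (hweak : ∀ W ∈ closure (chamberFace q Γ), ∀ j j' : Fin (countFinset m n).card,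
      j ≤ j' → mono W (σ j') ≤ mono W (σ j))
    (r : Fin (countFinset m n).card)
    (hr : α ≤ ∑ j ∈ Finset.Iic r, countProb p (σ j))
    (hrmin : ∀ r' : Fin (countFinset m n).card, r' < r →
      ∑ j ∈ Finset.Iic r', countProb p (σ j) < α) :
    (∀ W ∈ closure (chamberFace q Γ), upperQuantile p n α W = mono W (σ r)) ∧
    (∀ W ∈ chamberFace q Γ,
      Real.log (upperQuantile p n α W) = ∑ i, (σ r i : ℝ) * Real.log (W i)) := by
  have hquantile : ∀ W ∈ closure (chamberFace q Γ), upperQuantile p n α W = mono W (σ r) := by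
    intro W hW
    have hWnonneg := (closure_chamberFace_subset_closedSimplex q Γ hW).1
    rw [upperQuantile_eq_sSup_comp p α W hmem hinj]
    exact sSup_tail_eq_of_antitone (hweak W hW) (mono_nonneg hWnonneg _)
      (fun j => countProb_nonneg (fun i => (hp i).1.le) _) hα.1 hr hrmin
  refine ⟨hquantile, fun W hW => ?_⟩
  rw [hquantile W (subset_closure hW), log_mono hW.1.1]

/-- **Exact chamber quantile formula.** Given the unique enumeration `σ` of `C_n`
strictly ordering the monomials on `F_Γ`, and the minimal index `r` whose cumulative
probability reaches `α`, the upper `α`-quantile equals the monomial `W^{σ r}` on the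
closure of `F_Γ`; in log coordinates it is linear on `F_Γ`. -/
theorem chamber_quantile_formula (m n : ℕ) (hm : 2 ≤ m) (hn : 1 ≤ n)
    (p q : Fin m → ℝ) (hp : ∀ i, 0 < p i ∧ p i < 1) (hpsum : ∑ i, p i = 1)
    (hq : ∀ i, 0 < q i) (α : ℝ) (hα : 0 < α ∧ α < 1)
    (Γ : Set (Fin m → ℝ)) (hΓ : IsChamber m n Γ)
    (hadm : (chamberFace q Γ).Nonempty)
    (σ : Fin (countFinset m n).card → (Fin m → ℕ))
    (hmem : ∀ j, σ j ∈ countFinset m n) (hinj : Function.Injective σ)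
    (hstrict : ∀ W ∈ chamberFace q Γ, ∀ j j' : Fin (countFinset m n).card,
      j < j' → mono W (σ j') < mono W (σ j))
    (hweak : ∀ W ∈ closure (chamberFace q Γ), ∀ j j' : Fin (countFinset m n).card,
      j ≤ j' → mono W (σ j') ≤ mono W (σ j))
    (r : Fin (countFinset m n).card)
    (hr : α ≤ ∑ j ∈ Finset.Iic r, countProb p (σ j))
    (hrmin : ∀ r' : Fin (countFinset m n).card, r' < r →
      ∑ j ∈ Finset.Iic r', countProb p (σ j) < α) :
    (∀ W ∈ closure (chamberFace q Γ), upperQuantile p n α W = mono W (σ r)) ∧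
    (∀ W ∈ chamberFace q Γ,
      Real.log (upperQuantile p n α W) = ∑ i, (σ r i : ℝ) * Real.log (W i)) :=
  chamber_quantile_formula_general m n p q hp α hα Γ σ hmem hinj hweak r hr hrmin
end
end

section
/- Exact quantile on a nonzero stratum: Fix α ∈ (0,1) and a nonempty S ⊆ {1,…,m} with Π_S := Σ_{k ∈ C_n : supp(k) ⊆ S} π_k ≥ α. Let σ ⊆ W̄ be a nonempty set such that every W ∈ σ has support exactly S (i.e. W_i > 0 iff i ∈ S) and such that for every pair k, ℓ ∈ C_n with supp(k) ⊆ S and supp(ℓ) ⊆ S, the sign of W^k − W^ℓ (as an element of {−1, 0, 1}) is the same for all W ∈ σ. Then there exists a count vector k_σ ∈ C_n with supp(k_σ) ⊆ S such that Q_{n,α}(W) = W^{k_σ} for every W ∈ σ. -/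
open Finset Filter Topology
open scoped Classical

noncomputable section

/-- If the tail mass at `v` is at least `α` and the strict tail mass is below `α`,
then the upper quantile equals `v`. -/
lemma quantile_eq_of_tail {m : ℕ} (p : Fin m → ℝ) (n : ℕ) (α v : ℝ)
    (hπ : ∀ k : Fin m → ℕ, 0 ≤ countProb p k)
    (W : Fin m → ℝ) (hv : 0 < v)
    (hA : α ≤ ∑ k ∈ countFinset m n, if v ≤ mono W k then countProb p k else 0)
    (hB : (∑ k ∈ countFinset m n, if v < mono W k then countProb p k else 0) < α) :
    upperQuantile p n α W = v := by
  have hub : ∀ t ∈ {t : ℝ | 0 ≤ t ∧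
      α ≤ ∑ k ∈ countFinset m n, if t ≤ mono W k then countProb p k else 0}, t ≤ v := by
    rintro t ⟨ht0, htα⟩
    by_contra h
    push_neg at h
    have hle : (∑ k ∈ countFinset m n, if t ≤ mono W k then countProb p k else 0)
        ≤ ∑ k ∈ countFinset m n, if v < mono W k then countProb p k else 0 := by
      refine Finset.sum_le_sum fun k _ => ?_
      split_ifs with h1 h2 h3
      · exact le_rfl
      · exact absurd (lt_of_lt_of_le h h1) h2
      · exact hπ k
      · exact le_rfl
    linarith
  have hmem : v ∈ {t : ℝ | 0 ≤ t ∧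
      α ≤ ∑ k ∈ countFinset m n, if t ≤ mono W k then countProb p k else 0} := ⟨hv.le, hA⟩
  exact le_antisymm (csSup_le ⟨v, hmem⟩ hub) (le_csSup ⟨v, hub⟩ hmem)

/-- **Exact quantile on a nonzero stratum.** If the mass of count vectors supported in
`S` is at least `α`, and `σ` is a set of wealth profiles with support exactly `S` on
which the sign of `W^k − W^ℓ` is constant for all count vectors supported in `S`, then
there is a single count vector `k_σ` supported in `S` with `Q_{n,α}(W) = W^{k_σ}` on
all of `σ`. -/
theorem nonzero_stratum_quantile (m n : ℕ) (hm : 2 ≤ m) (hn : 1 ≤ n)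
    (p q : Fin m → ℝ) (hp : ∀ i, 0 < p i ∧ p i < 1) (hpsum : ∑ i, p i = 1)
    (hq : ∀ i, 0 < q i) (α : ℝ) (hα : 0 < α ∧ α < 1)
    (S : Finset (Fin m)) (hS : S.Nonempty)
    (hmass : α ≤ ∑ k ∈ countFinset m n,
        if ∀ i, 0 < k i → i ∈ S then countProb p k else 0)
    (σ : Set (Fin m → ℝ)) (hσsub : σ ⊆ closedSimplex q) (hσne : σ.Nonempty)
    (hsupp : ∀ W ∈ σ, ∀ i, 0 < W i ↔ i ∈ S)
    (hsign : ∀ k l : Fin m → ℕ, k ∈ countFinset m n → l ∈ countFinset m n →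
      (∀ i, 0 < k i → i ∈ S) → (∀ i, 0 < l i → i ∈ S) →
      ∀ W ∈ σ, ∀ W' ∈ σ,
        (mono W k < mono W l ↔ mono W' k < mono W' l) ∧
        (mono W k = mono W l ↔ mono W' k = mono W' l)) :
    ∃ kσ ∈ countFinset m n, (∀ i, 0 < kσ i → i ∈ S) ∧
      ∀ W ∈ σ, upperQuantile p n α W = mono W kσ := by
  classical
  obtain ⟨W₀, hW₀⟩ := hσne
  have hπ : ∀ k : Fin m → ℕ, 0 ≤ countProb p k := fun k =>
    mul_nonneg (Nat.cast_nonneg _) (Finset.prod_nonneg fun i _ => pow_nonneg (hp i).1.le _)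
  have hmonopos : ∀ W ∈ σ, ∀ k : Fin m → ℕ, (∀ i, 0 < k i → i ∈ S) → 0 < mono W k := by
    intro W hW k hk
    refine Finset.prod_pos fun i _ => ?_
    rcases Nat.eq_zero_or_pos (k i) with h | h
    · simp [h]
    · exact pow_pos ((hsupp W hW i).2 (hk i h)) _
  have hmonozero : ∀ W ∈ σ, ∀ k : Fin m → ℕ, ¬(∀ i, 0 < k i → i ∈ S) → mono W k = 0 := by
    intro W hW k hk
    push_neg at hk
    obtain ⟨i, hi1, hi2⟩ := hk
    have hWi : W i = 0 :=
      le_antisymm (not_lt.mp (fun h => hi2 ((hsupp W hW i).mp h))) ((hσsub hW).1 i)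
    exact Finset.prod_eq_zero (Finset.mem_univ i) (by rw [hWi]; exact zero_pow hi1.ne')
  -- a count vector supported in S
  obtain ⟨i₀, hi₀⟩ := hS
  have hk₀mem : (fun i => if i = i₀ then n else 0) ∈ countFinset m n := by
    simp only [countFinset, Finset.mem_filter, Fintype.mem_piFinset, Finset.mem_range,
      Nat.lt_succ_iff]
    constructor
    · intro i; split_ifs <;> omega
    · simp
  have hk₀supp : ∀ i, 0 < (if i = i₀ then n else 0) → i ∈ S := by
    intro i hi
    by_cases h : i = i₀
    · exact h ▸ hi₀
    · simp [h] at hi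
  -- the set of supported count vectors whose tail mass at W₀ is at least α
  set T' : Finset (Fin m → ℕ) := (countFinset m n).filter
    (fun k => (∀ i, 0 < k i → i ∈ S) ∧
      α ≤ ∑ l ∈ countFinset m n, if mono W₀ k ≤ mono W₀ l then countProb p l else 0) with hT'
  have hT'ne : T'.Nonempty := by
    obtain ⟨kmin, hkminmem, hkminmin⟩ :=
      Finset.exists_min_image ((countFinset m n).filter (fun k => ∀ i, 0 < k i → i ∈ S))
        (fun k => mono W₀ k) ⟨_, Finset.mem_filter.mpr ⟨hk₀mem, hk₀supp⟩⟩
    obtain ⟨hkminC, hkminS⟩ := Finset.mem_filter.mp hkminmem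
    refine ⟨kmin, Finset.mem_filter.mpr ⟨hkminC, hkminS, le_trans hmass ?_⟩⟩
    refine Finset.sum_le_sum fun k hk => ?_
    by_cases hks : ∀ i, 0 < k i → i ∈ S
    · rw [if_pos hks, if_pos (hkminmin k (Finset.mem_filter.mpr ⟨hk, hks⟩))]
    · rw [if_neg hks]
      split_ifs with h
      · exact hπ k
      · exact le_rfl
  obtain ⟨kσ, hkσT', hkσmax⟩ := Finset.exists_max_image T' (fun k => mono W₀ k) hT'ne
  obtain ⟨hkσC, hkσS, hA₀⟩ := Finset.mem_filter.mp hkσT'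
  -- strict tail mass at W₀ is below α
  have hB₀ : (∑ k ∈ countFinset m n,
      if mono W₀ kσ < mono W₀ k then countProb p k else 0) < α := by
    by_contra hcon
    push_neg at hcon
    have hUne : ((countFinset m n).filter
        (fun k => mono W₀ kσ < mono W₀ k)).Nonempty := by
      by_contra hUe
      rw [Finset.not_nonempty_iff_eq_empty] at hUe
      have h0 : (∑ k ∈ countFinset m n,
          if mono W₀ kσ < mono W₀ k then countProb p k else 0) = 0 := by
        rw [← Finset.sum_filter, hUe, Finset.sum_empty]
      rw [h0] at hcon
      linarith [hα.1]
    obtain ⟨k', hk'U, hk'min⟩ := Finset.exists_min_image _ (fun k => mono W₀ k) hUne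
    obtain ⟨hk'C, hk'gt⟩ := Finset.mem_filter.mp hk'U
    have hk'S : ∀ i, 0 < k' i → i ∈ S := by
      by_contra h
      have hz := hmonozero W₀ hW₀ k' h
      have hpos := hmonopos W₀ hW₀ kσ hkσS
      linarith
    have htail' : α ≤ ∑ k ∈ countFinset m n,
        if mono W₀ k' ≤ mono W₀ k then countProb p k else 0 := by
      refine le_trans hcon (Finset.sum_le_sum fun k hk => ?_)
      split_ifs with h1 h2 h3
      · exact le_rfl
      · exact absurd (hk'min k (Finset.mem_filter.mpr ⟨hk, h1⟩)) h2
      · exact hπ k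
      · exact le_rfl
    have hmem' : k' ∈ T' := Finset.mem_filter.mpr ⟨hk'C, hk'S, htail'⟩
    have := hkσmax k' hmem'
    linarith
  -- transfer the comparisons from W₀ to any W ∈ σ
  have key : ∀ W ∈ σ, ∀ l ∈ countFinset m n,
      (mono W kσ < mono W l ↔ mono W₀ kσ < mono W₀ l) ∧
      (mono W kσ ≤ mono W l ↔ mono W₀ kσ ≤ mono W₀ l) := by
    intro W hW l hl
    by_cases hls : ∀ i, 0 < l i → i ∈ S
    · obtain ⟨h1, h2⟩ := hsign kσ l hkσC hl hkσS hls W hW W₀ hW₀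
      refine ⟨h1, ?_⟩
      rw [le_iff_lt_or_eq, le_iff_lt_or_eq]
      exact or_congr h1 h2
    · have hz : mono W l = 0 := hmonozero W hW l hls
      have hz0 : mono W₀ l = 0 := hmonozero W₀ hW₀ l hls
      have hp1 : 0 < mono W kσ := hmonopos W hW kσ hkσS
      have hp2 : 0 < mono W₀ kσ := hmonopos W₀ hW₀ kσ hkσS
      rw [hz, hz0]
      exact ⟨iff_of_false (by linarith) (by linarith),
        iff_of_false (by linarith) (by linarith)⟩
  refine ⟨kσ, hkσC, hkσS, fun W hW => ?_⟩
  refine quantile_eq_of_tail p n α (mono W kσ) hπ W (hmonopos W hW kσ hkσS) ?_ ?_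
  · calc α ≤ ∑ l ∈ countFinset m n,
        if mono W₀ kσ ≤ mono W₀ l then countProb p l else 0 := hA₀
    _ = ∑ l ∈ countFinset m n, if mono W kσ ≤ mono W l then countProb p l else 0 :=
        Finset.sum_congr rfl fun l hl => (if_congr ((key W hW l hl).2).symm rfl rfl)
  · calc (∑ l ∈ countFinset m n, if mono W kσ < mono W l then countProb p l else 0)
        = ∑ l ∈ countFinset m n, if mono W₀ kσ < mono W₀ l then countProb p l else 0 :=
          Finset.sum_congr rfl fun l hl => (if_congr ((key W hW l hl).1) rfl rfl)
    _ < α := hB₀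
end
end

section
/- Strict concavity of the stratum objective: Let T be a finite nonempty index set, let a : T → ℝ be arbitrary, let c > 0 and q_i > 0 for each i ∈ T, and let n > 0 be a real number. Then the function ψ : ℝ^T → ℝ defined by ψ(z) = Σ_{i ∈ T} a_i z_i − n · log( c + Σ_{i ∈ T} q_i · e^{z_i} ) is strictly concave on ℝ^T. -/
open Finset Filter Topology
open scoped Classical

noncomputable section

lemma gm_lt {u v t s : ℝ} (hu : 0 < u) (hv : 0 < v) (huv : u ≠ v)
    (ht : 0 < t) (hs : 0 < s) (hts : t + s = 1) :
    u ^ t * v ^ s < t * u + s * v := by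
  have hlog := strictConcaveOn_log_Ioi.2 (Set.mem_Ioi.2 hu) (Set.mem_Ioi.2 hv) huv ht hs hts
  simp only [smul_eq_mul] at hlog
  have h1 : u ^ t * v ^ s = Real.exp (t * Real.log u + s * Real.log v) := by
    rw [Real.exp_add, Real.rpow_def_of_pos hu, Real.rpow_def_of_pos hv, mul_comm t, mul_comm s]
  have h2 : 0 < t * u + s * v := by positivity
  rw [h1, ← Real.exp_log h2]
  exact Real.exp_lt_exp.2 (by simpa using hlog)

lemma gm_le {u v t s : ℝ} (hu : 0 < u) (hv : 0 < v)
    (ht : 0 < t) (hs : 0 < s) (hts : t + s = 1) :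
    u ^ t * v ^ s ≤ t * u + s * v :=
  Real.geom_mean_le_arith_mean2_weighted ht.le hs.le hu.le hv.le hts

-- scaled versions: u^t v^s vs (t*(u/A)+s*(v/B)) * (A^t B^s)
lemma gm_scaled_le {u v A B t s : ℝ} (hu : 0 < u) (hv : 0 < v) (hA : 0 < A) (hB : 0 < B)
    (ht : 0 < t) (hs : 0 < s) (hts : t + s = 1) :
    u ^ t * v ^ s ≤ (t * (u / A) + s * (v / B)) * (A ^ t * B ^ s) := by
  have h := gm_le (div_pos hu hA) (div_pos hv hB) ht hs hts
  have h2 : (u / A) ^ t * (v / B) ^ s * (A ^ t * B ^ s) = u ^ t * v ^ s := by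
    rw [Real.div_rpow hu.le hA.le, Real.div_rpow hv.le hB.le]
    field_simp
  calc u ^ t * v ^ s = (u / A) ^ t * (v / B) ^ s * (A ^ t * B ^ s) := h2.symm
    _ ≤ (t * (u / A) + s * (v / B)) * (A ^ t * B ^ s) := by
        apply mul_le_mul_of_nonneg_right h; positivity

lemma gm_scaled_lt {u v A B t s : ℝ} (hu : 0 < u) (hv : 0 < v) (hA : 0 < A) (hB : 0 < B)
    (hne : u / A ≠ v / B)
    (ht : 0 < t) (hs : 0 < s) (hts : t + s = 1) :
    u ^ t * v ^ s < (t * (u / A) + s * (v / B)) * (A ^ t * B ^ s) := by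
  have h := gm_lt (div_pos hu hA) (div_pos hv hB) hne ht hs hts
  have h2 : (u / A) ^ t * (v / B) ^ s * (A ^ t * B ^ s) = u ^ t * v ^ s := by
    rw [Real.div_rpow hu.le hA.le, Real.div_rpow hv.le hB.le]
    field_simp
  calc u ^ t * v ^ s = (u / A) ^ t * (v / B) ^ s * (A ^ t * B ^ s) := h2.symm
    _ < (t * (u / A) + s * (v / B)) * (A ^ t * B ^ s) := by
        apply mul_lt_mul_of_pos_right h; positivity

/-- **Strict concavity of the stratum objective.** The function
`ψ(z) = Σ a_i z_i − n·log(c + Σ q_i e^{z_i})` is strictly concave on `ℝ^T`. -/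
theorem stratum_objective_strict_concave (T : Type*) [Fintype T] [Nonempty T]
    (a : T → ℝ) (c : ℝ) (hc : 0 < c) (q : T → ℝ) (hq : ∀ i, 0 < q i)
    (n : ℝ) (hn : 0 < n) :
    StrictConcaveOn ℝ Set.univ
      (fun z : T → ℝ =>
        (∑ i, a i * z i) - n * Real.log (c + ∑ i, q i * Real.exp (z i))) := by
  refine ⟨convex_univ, fun x _ y _ hxy t s ht hs hts => ?_⟩
  set A : ℝ := c + ∑ i, q i * Real.exp (x i) with hAdef
  set B : ℝ := c + ∑ i, q i * Real.exp (y i) with hBdef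
  have hA : 0 < A := by
    have : 0 ≤ ∑ i, q i * Real.exp (x i) :=
      Finset.sum_nonneg fun i _ => mul_nonneg (hq i).le (Real.exp_pos _).le
    linarith
  have hB : 0 < B := by
    have : 0 ≤ ∑ i, q i * Real.exp (y i) :=
      Finset.sum_nonneg fun i _ => mul_nonneg (hq i).le (Real.exp_pos _).le
    linarith
  -- key Hölder-type strict inequality
  have key : c + ∑ i, q i * (Real.exp (x i) ^ t * Real.exp (y i) ^ s) < A ^ t * B ^ s := by
    have hsum_le : ∀ i ∈ Finset.univ (α := T),
        q i * (Real.exp (x i) ^ t * Real.exp (y i) ^ s) ≤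
        q i * ((t * (Real.exp (x i) / A) + s * (Real.exp (y i) / B)) * (A ^ t * B ^ s)) :=
      fun i _ => mul_le_mul_of_nonneg_left
        (gm_scaled_le (Real.exp_pos _) (Real.exp_pos _) hA hB ht hs hts) (hq i).le
    have htot : (t * (c / A) + s * (c / B)) * (A ^ t * B ^ s) +
        ∑ i, q i * ((t * (Real.exp (x i) / A) + s * (Real.exp (y i) / B)) * (A ^ t * B ^ s)) =
        A ^ t * B ^ s := by
      have e1 : ∑ i, q i * ((t * (Real.exp (x i) / A) + s * (Real.exp (y i) / B)) * (A ^ t * B ^ s)) =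
          (t / A * ∑ i, q i * Real.exp (x i) + s / B * ∑ i, q i * Real.exp (y i)) * (A ^ t * B ^ s) := by
        rw [Finset.mul_sum, Finset.mul_sum, ← Finset.sum_add_distrib, Finset.sum_mul]
        apply Finset.sum_congr rfl
        intro i _
        field_simp
      rw [e1, ← add_mul]
      have : t * (c / A) + s * (c / B) +
          (t / A * ∑ i, q i * Real.exp (x i) + s / B * ∑ i, q i * Real.exp (y i)) = 1 := by
        have hAe : ∑ i, q i * Real.exp (x i) = A - c := by rw [hAdef]; ring
        have hBe : ∑ i, q i * Real.exp (y i) = B - c := by rw [hBdef]; ring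
        rw [hAe, hBe]
        have h1 : s = 1 - t := by linarith
        rw [h1]
        field_simp
        ring
      rw [this, one_mul]
    rw [← htot]
    by_cases hAB : A = B
    · -- some coordinate differs
      have hex : ∃ i, x i ≠ y i := by
        by_contra h
        push_neg at h
        exact hxy (funext h)
      obtain ⟨i0, hi0⟩ := hex
      have hc_le : c ≤ (t * (c / A) + s * (c / B)) * (A ^ t * B ^ s) := by
        have := gm_scaled_le hc hc hA hB ht hs hts
        rwa [← Real.rpow_add hc, hts, Real.rpow_one] at this
      have hstrict : ∑ i, q i * (Real.exp (x i) ^ t * Real.exp (y i) ^ s) <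
          ∑ i, q i * ((t * (Real.exp (x i) / A) + s * (Real.exp (y i) / B)) * (A ^ t * B ^ s)) := by
        apply Finset.sum_lt_sum hsum_le
        refine ⟨i0, Finset.mem_univ _, ?_⟩
        apply mul_lt_mul_of_pos_left _ (hq i0)
        apply gm_scaled_lt (Real.exp_pos _) (Real.exp_pos _) hA hB _ ht hs hts
        rw [hAB]
        intro h
        rw [div_eq_div_iff hB.ne' hB.ne'] at h
        exact hi0 (Real.exp_injective (mul_right_cancel₀ hB.ne' h))
      linarith
    · have hc_lt : c < (t * (c / A) + s * (c / B)) * (A ^ t * B ^ s) := by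
        have hne : c / A ≠ c / B := by
          intro h
          rw [div_eq_div_iff hA.ne' hB.ne'] at h
          exact hAB (mul_left_cancel₀ hc.ne' h).symm
        have := gm_scaled_lt hc hc hA hB hne ht hs hts
        rwa [← Real.rpow_add hc, hts, Real.rpow_one] at this
      have hsum : ∑ i, q i * (Real.exp (x i) ^ t * Real.exp (y i) ^ s) ≤
          ∑ i, q i * ((t * (Real.exp (x i) / A) + s * (Real.exp (y i) / B)) * (A ^ t * B ^ s)) :=
        Finset.sum_le_sum hsum_le
      linarith
  -- rewrite midpoint sum
  have hmid : (c + ∑ i, q i * Real.exp ((t • x + s • y) i)) =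
      c + ∑ i, q i * (Real.exp (x i) ^ t * Real.exp (y i) ^ s) := by
    congr 1
    apply Finset.sum_congr rfl
    intro i _
    congr 1
    simp only [Pi.add_apply, Pi.smul_apply, smul_eq_mul]
    rw [Real.exp_add, mul_comm t, mul_comm s, Real.exp_mul, Real.exp_mul]
  have hmidpos : 0 < c + ∑ i, q i * (Real.exp (x i) ^ t * Real.exp (y i) ^ s) := by
    have : 0 ≤ ∑ i, q i * (Real.exp (x i) ^ t * Real.exp (y i) ^ s) :=
      Finset.sum_nonneg fun i _ => mul_nonneg (hq i).le (by positivity)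
    linarith
  have hlog : Real.log (c + ∑ i, q i * Real.exp ((t • x + s • y) i)) < t * Real.log A + s * Real.log B := by
    rw [hmid]
    calc Real.log (c + ∑ i, q i * (Real.exp (x i) ^ t * Real.exp (y i) ^ s))
        < Real.log (A ^ t * B ^ s) := Real.log_lt_log hmidpos key
      _ = t * Real.log A + s * Real.log B := by
          rw [Real.log_mul (by positivity) (by positivity), Real.log_rpow hA, Real.log_rpow hB]
  have hlin : ∑ i, a i * (t • x + s • y) i = t * ∑ i, a i * x i + s * ∑ i, a i * y i := by
    rw [Finset.mul_sum, Finset.mul_sum, ← Finset.sum_add_distrib]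
    apply Finset.sum_congr rfl
    intro i _
    simp only [Pi.add_apply, Pi.smul_apply, smul_eq_mul]
    ring
  simp only [smul_eq_mul]
  rw [hlin]
  nlinarith [mul_lt_mul_of_pos_left hlog hn]
end
end
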